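/- Let β > 0. For every Borel probability measure P on [0,1], the radial energy satisfies ∬ k_rad(t,t') dP(t) dP(t') ≥ √(π/β), with equality if and only if P equals Lebesgue measure restricted to [0,1]. -/

import Mathlib

open MeasureTheory ProbabilityTheory Real
open scoped RealInnerProductSpace ENNReal

noncomputable section

/-- The standard Gaussian measure `N(0, I_d)` on `ℝ^d`, defined by its density
`(2π)^(-d/2) exp(-‖x‖²/2)` with respect to Lebesgue measure. -/
def stdGaussian (d : ℕ) : Measure (EuclideanSpace ℝ (Fin d)) :=
  volume.withDensity fun x => ENNReal.ofReal ((2 * π) ^ (-(d : ℝ) / 2) * Real.exp (-‖x‖ ^ 2 / 2))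

/-- The uniform (normalized surface) probability measure on the unit sphere `S^{d-1}`,
viewed as a measure on the ambient space `ℝ^d`. -/
def sphereUniform (d : ℕ) : Measure (EuclideanSpace ℝ (Fin d)) :=
  Measure.map Subtype.val
    ((((volume : Measure (EuclideanSpace ℝ (Fin d))).toSphere) Set.univ)⁻¹ •
      ((volume : Measure (EuclideanSpace ℝ (Fin d))).toSphere))

/-- The chi-squared distribution with `d` degrees of freedom, i.e. the Gamma distribution
with shape `d/2` and rate `1/2`. -/
def chiSqMeasure (d : ℕ) : Measure ℝ := gammaMeasure ((d : ℝ) / 2) (1 / 2)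

/-- The CDF of the gamma distribution (removed from Mathlib; old definition restored). -/
def gammaCDFReal (a r : ℝ) : StieltjesFunction ℝ :=
  cdf (gammaMeasure a r)

/-- The CDF of the chi-squared distribution with `d` degrees of freedom. -/
def chiSqCDF (d : ℕ) (s : ℝ) : ℝ := gammaCDFReal ((d : ℝ) / 2) (1 / 2) s

/-- Lebesgue measure restricted to `[0,1]`, i.e. `Unif[0,1]`. -/
def unifI : Measure ℝ := volume.restrict (Set.Icc 0 1)

/-- The wristband map `Φ(x) = (x/‖x‖, F_{χ²_d}(‖x‖²))`. -/
def wristband (d : ℕ) (x : EuclideanSpace ℝ (Fin d)) : EuclideanSpace ℝ (Fin d) × ℝ :=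
  (‖x‖⁻¹ • x, chiSqCDF d (‖x‖ ^ 2))

/-- The infinite-image Neumann radial kernel
`k_rad(t,t') = Σ_{m∈ℤ} exp(-β(t-t'-2m)²) + Σ_{m∈ℤ} exp(-β(t+t'-2m)²)`. -/
def kRad (β : ℝ) (t t' : ℝ) : ℝ :=
  (∑' m : ℤ, Real.exp (-β * (t - t' - 2 * m) ^ 2)) +
    (∑' m : ℤ, Real.exp (-β * (t + t' - 2 * m) ^ 2))

open scoped NNReal

lemma summable_exp_neg_nat (c : ℝ) (hc : 0 < c) : Summable (fun n : ℕ => rexp (-c * (n:ℝ)^2)) := by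
  refine Summable.of_nonneg_of_le (fun n => (Real.exp_pos _).le) ?_ 
    (summable_geometric_of_lt_one (Real.exp_pos (-c)).le (Real.exp_lt_one_iff.2 (by linarith)))
  intro n
  rw [← Real.exp_nat_mul]
  apply Real.exp_le_exp.2
  have h : (n:ℝ) ≤ (n:ℝ)^2 := by exact_mod_cast Nat.le_self_pow two_ne_zero n
  nlinarith [h, hc.le]

lemma summable_exp_neg_sq (c : ℝ) (hc : 0 < c) : Summable (fun n : ℤ => rexp (-c * (n:ℝ)^2)) := by
  rw [summable_int_iff_summable_nat_and_neg]
  constructor <;> simpa using summable_exp_neg_nat c hc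

lemma summable_gauss (β x : ℝ) (hβ : 0 < β) :
    Summable (fun m : ℤ => rexp (-β * (x - 2*m)^2)) := by
  apply Summable.of_norm_bounded_eventually (g := fun m : ℤ => rexp (-β * (m:ℝ)^2))
    (summable_exp_neg_sq β hβ)
  rw [Filter.eventually_cofinite]
  apply Set.Finite.subset (Set.finite_Icc (-(⌈|x|⌉)) ⌈|x|⌉)
  intro m hm
  simp only [Set.mem_setOf_eq, not_le, Real.norm_eq_abs, Real.abs_exp] at hm
  have h1 : (x - 2*m)^2 < (m:ℝ)^2 := by
    by_contra h
    exact absurd (Real.exp_le_exp.2 (by nlinarith)) (not_le.2 hm)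
  have h2 : |(m:ℝ)| < |x| := by
    rcases abs_cases ((m:ℤ):ℝ) with ⟨he, _⟩ | ⟨he, _⟩ <;>
      rcases abs_cases x with ⟨hx, _⟩ | ⟨hx, _⟩ <;> nlinarith
  have h3 : |m| ≤ ⌈|x|⌉ := by
    have : |(m:ℝ)| ≤ (⌈|x|⌉ : ℝ) := le_trans h2.le (Int.le_ceil _)
    exact_mod_cast this
  simp only [Set.mem_Icc]
  exact abs_le.1 h3

lemma summable_dom (β : ℝ) (hβ : 0 < β) (u : ℤ → ℝ) (hu : ∀ n, |u n| ≤ 1) :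
    Summable (fun n : ℤ => rexp (-(π^2/(4*β)) * (n:ℝ)^2) * u n) := by
  apply Summable.of_norm_bounded (summable_exp_neg_sq (π^2/(4*β)) (by positivity))
  intro n
  rw [Real.norm_eq_abs, abs_mul, Real.abs_exp]
  calc rexp (-(π^2/(4*β)) * (n:ℝ)^2) * |u n| ≤ rexp (-(π^2/(4*β)) * (n:ℝ)^2) * 1 :=
        mul_le_mul_of_nonneg_left (hu n) (Real.exp_pos _).le
    _ = _ := mul_one _

lemma exp_re_aux (u v : ℝ) :
    (Complex.exp ((u:ℂ) + (v:ℂ)*Complex.I)).re = rexp u * Real.cos v := by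
  rw [Complex.exp_re]
  congr 2 <;> simp

lemma exp_norm_aux (u v : ℝ) : ‖Complex.exp ((u:ℂ) + (v:ℂ)*Complex.I)‖ = rexp u := by
  rw [Complex.norm_exp]
  congr 1
  simp

lemma poisson (β : ℝ) (hβ : 0 < β) (x : ℝ) :
    ∑' m : ℤ, rexp (-β * (x - 2*m)^2)
      = Real.sqrt (π/β) / 2 * ∑' n : ℤ, rexp (-(π^2/(4*β)) * (n:ℝ)^2) * Real.cos (π*n*x) := by
  have hπ := Real.pi_pos
  have hβ' : (β:ℂ) ≠ 0 := by exact_mod_cast hβ.ne'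
  have hπc : (π:ℂ) ≠ 0 := by exact_mod_cast hπ.ne'
  set a : ℂ := ((π/(4*β) : ℝ) : ℂ) with ha_def
  have ha : 0 < a.re := by
    rw [ha_def, Complex.ofReal_re]; positivity
  have hane : a ≠ 0 := by
    intro h; rw [h] at ha; simp at ha
  have key := Complex.tsum_exp_neg_quadratic ha (Complex.I * x / 2)
  -- transform LHS of key
  have hL : (∑' n : ℤ, Complex.exp (-↑π * a * (n:ℂ)^2 + 2*↑π*(Complex.I * x / 2)*(n:ℂ)))
      = ∑' n : ℤ, Complex.exp (((-(π^2/(4*β)) * (n:ℝ)^2 : ℝ) : ℂ) + ((π*(n:ℝ)*x : ℝ) : ℂ)*Complex.I) := by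
    refine tsum_congr fun n => ?_
    congr 1
    rw [ha_def]
    push_cast
    field_simp
  -- transform RHS of key
  have hR : (∑' n : ℤ, Complex.exp (-↑π / a * ((n:ℂ) + Complex.I * (Complex.I * x / 2))^2))
      = ∑' n : ℤ, ((rexp (-β * (x - 2*n)^2) : ℝ) : ℂ) := by
    refine tsum_congr fun n => ?_
    rw [Complex.ofReal_exp]
    congr 1
    have hI : Complex.I * (Complex.I * (x:ℂ) / 2) = -((x:ℂ)/2) := by
      rw [show Complex.I * (Complex.I * (x:ℂ) / 2) = (Complex.I*Complex.I) * ((x:ℂ)/2) by ring,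
        Complex.I_mul_I]
      ring
    rw [hI, ha_def]
    push_cast
    field_simp [hπc]
    ring
  rw [hL, hR] at key
  -- key : nice sum = 1/a^(1/2) * gaussian sum
  have hcoef : a ^ (1/2 : ℂ) = ((Real.sqrt (π/(4*β)) : ℝ) : ℂ) := by
    rw [ha_def, Real.sqrt_eq_rpow, Complex.ofReal_cpow (by positivity)]
    norm_num
  rw [hcoef] at key
  have hsq : ((Real.sqrt (π/(4*β)) : ℝ) : ℂ) ≠ 0 := by
    simp only [ne_eq, Complex.ofReal_eq_zero]
    positivity
  have key2 : (∑' n : ℤ, ((rexp (-β * (x - 2*n)^2) : ℝ) : ℂ))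
      = ((Real.sqrt (π/(4*β)) : ℝ) : ℂ) *
        ∑' n : ℤ, Complex.exp (((-(π^2/(4*β)) * (n:ℝ)^2 : ℝ) : ℂ) + ((π*(n:ℝ)*x : ℝ) : ℂ)*Complex.I) := by
    rw [key, ← mul_assoc, mul_one_div, div_self hsq, one_mul]
  -- take real parts
  have hsummC : Summable (fun n : ℤ =>
      Complex.exp (((-(π^2/(4*β)) * (n:ℝ)^2 : ℝ) : ℂ) + ((π*(n:ℝ)*x : ℝ) : ℂ)*Complex.I)) := by
    apply Summable.of_norm_bounded (summable_exp_neg_sq (π^2/(4*β)) (by positivity))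
    intro n
    rw [exp_norm_aux]
  have := congrArg Complex.re key2
  rw [← Complex.ofReal_tsum, Complex.ofReal_re, Complex.re_ofReal_mul,
    Complex.re_tsum hsummC] at this
  rw [this]
  have hhalf : Real.sqrt (π/(4*β)) = Real.sqrt (π/β) / 2 := by
    rw [show π/(4*β) = (π/β) * (1/4) by ring, Real.sqrt_mul (by positivity),
      show (1/4:ℝ) = (1/2)^2 by norm_num, Real.sqrt_sq (by norm_num)]
    ring
  rw [hhalf]
  congr 1
  refine tsum_congr fun n => ?_
  rw [exp_re_aux]

lemma kRad_eq (β : ℝ) (hβ : 0 < β) (t t' : ℝ) :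
    kRad β t t' = Real.sqrt (π/β) *
      ∑' n : ℤ, rexp (-(π^2/(4*β)) * (n:ℝ)^2) * (Real.cos (π*n*t) * Real.cos (π*n*t')) := by
  have h1 : (∑' m : ℤ, Real.exp (-β * (t - t' - 2 * (m:ℝ)) ^ 2))
      = ∑' m : ℤ, rexp (-β * ((t - t') - 2*m)^2) := by
    refine tsum_congr fun m => ?_; ring_nf
  have h2 : (∑' m : ℤ, Real.exp (-β * (t + t' - 2 * (m:ℝ)) ^ 2))
      = ∑' m : ℤ, rexp (-β * ((t + t') - 2*m)^2) := by
    refine tsum_congr fun m => ?_; ring_nf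
  rw [kRad, h1, h2, poisson β hβ, poisson β hβ]
  have hs1 := summable_dom β hβ (fun n => Real.cos (π*n*(t-t'))) (fun n => Real.abs_cos_le_one _)
  have hs2 := summable_dom β hβ (fun n => Real.cos (π*n*(t+t'))) (fun n => Real.abs_cos_le_one _)
  rw [← mul_add, ← Summable.tsum_add hs1 hs2]
  have : (∑' n : ℤ, (rexp (-(π^2/(4*β)) * (n:ℝ)^2) * Real.cos (π*n*(t-t')) +
      rexp (-(π^2/(4*β)) * (n:ℝ)^2) * Real.cos (π*n*(t+t'))))
      = ∑' n : ℤ, 2 * (rexp (-(π^2/(4*β)) * (n:ℝ)^2) *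
          (Real.cos (π*n*t) * Real.cos (π*n*t'))) := by
    refine tsum_congr fun n => ?_
    have hc : Real.cos (π*n*(t-t')) + Real.cos (π*n*(t+t'))
        = 2 * (Real.cos (π*n*t) * Real.cos (π*n*t')) := by
      rw [show π*n*(t-t') = π*n*t - π*n*t' by ring, show π*n*(t+t') = π*n*t + π*n*t' by ring,
        Real.cos_sub, Real.cos_add]
      ring
    rw [← mul_add, hc]; ring
  rw [this, tsum_mul_left]
  ring

variable {P : Measure ℝ} [IsProbabilityMeasure P]

lemma integrable_cos_mul (c : ℝ) : Integrable (fun x : ℝ => Real.cos (c*x)) P := by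
  refine (integrable_const (1:ℝ)).mono' ?_ ?_
  · exact (Real.continuous_cos.comp (continuous_const.mul continuous_id)).aestronglyMeasurable
  · filter_upwards with x
    rw [Real.norm_eq_abs]
    exact Real.abs_cos_le_one _

lemma abs_intcos_le_one (c : ℝ) : |∫ x, Real.cos (c*x) ∂P| ≤ 1 := by
  have := MeasureTheory.norm_integral_le_of_norm_le_const
    (μ := P) (f := fun x : ℝ => Real.cos (c*x)) (C := 1) ?_
  · simpa using this
  · filter_upwards with x
    rw [Real.norm_eq_abs]
    exact Real.abs_cos_le_one _

lemma lint_bound (β : ℝ) (hβ : 0 < β) (f : ℤ → ℝ → ℝ)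
    (hf : ∀ n x, |f n x| ≤ rexp (-(π^2/(4*β)) * (n:ℝ)^2)) :
    (∑' n : ℤ, ∫⁻ x, ‖f n x‖₊ ∂P) ≠ ⊤ := by
  have hb : ∀ n : ℤ, (∫⁻ x, ‖f n x‖₊ ∂P) ≤ ENNReal.ofReal (rexp (-(π^2/(4*β)) * (n:ℝ)^2)) := by
    intro n
    calc (∫⁻ x, ‖f n x‖₊ ∂P) ≤ ∫⁻ _, ENNReal.ofReal (rexp (-(π^2/(4*β)) * (n:ℝ)^2)) ∂P := by
          refine lintegral_mono fun x => ?_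
          rw [← enorm_eq_nnnorm, Real.enorm_eq_ofReal_abs]
          exact ENNReal.ofReal_le_ofReal (hf n x)
      _ = ENNReal.ofReal (rexp (-(π^2/(4*β)) * (n:ℝ)^2)) := by
          rw [lintegral_const, measure_univ, mul_one]
  refine ne_top_of_le_ne_top ?_ (ENNReal.tsum_le_tsum hb)
  rw [← ENNReal.ofReal_tsum_of_nonneg (fun n => (Real.exp_pos _).le)
    (summable_exp_neg_sq _ (by positivity))]
  exact ENNReal.ofReal_ne_top

lemma energy_eq (β : ℝ) (hβ : 0 < β) :
    ∫ t, ∫ t', kRad β t t' ∂P ∂P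
      = Real.sqrt (π/β) * ∑' n : ℤ,
          rexp (-(π^2/(4*β)) * (n:ℝ)^2) * (∫ t, Real.cos (π*n*t) ∂P)^2 := by
  set e : ℤ → ℝ := fun n => rexp (-(π^2/(4*β)) * (n:ℝ)^2) with he
  set a : ℤ → ℝ := fun n => ∫ t, Real.cos (π*n*t) ∂P with ha
  have hinner : ∀ t : ℝ, (∫ t', kRad β t t' ∂P)
      = Real.sqrt (π/β) * ∑' n : ℤ, e n * (Real.cos (π*n*t) * a n) := by
    intro t
    have : (fun t' => kRad β t t') = fun t' =>
        Real.sqrt (π/β) * ∑' n : ℤ, e n * (Real.cos (π*n*t) * Real.cos (π*n*t')) :=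
      funext fun t' => kRad_eq β hβ t t'
    rw [this, integral_const_mul]
    congr 1
    rw [integral_tsum]
    · refine tsum_congr fun n => ?_
      have : (fun t' => e n * (Real.cos (π*n*t) * Real.cos (π*n*t')))
          = fun t' => (e n * Real.cos (π*n*t)) * Real.cos (π*(n:ℝ)*t') := by
        funext t'; ring
      rw [this, integral_const_mul]
      show e n * Real.cos (π*n*t) * a n = e n * (Real.cos (π*n*t) * a n)
      ring
    · intro n
      exact Continuous.aestronglyMeasurable (by fun_prop)
    · apply lint_bound β hβ
      intro n x
      rw [abs_mul, abs_mul, he]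
      simp only [Real.abs_exp]
      calc rexp (-(π^2/(4*β)) * (n:ℝ)^2) * (|Real.cos (π*n*t)| * |Real.cos (π*n*x)|)
          ≤ rexp (-(π^2/(4*β)) * (n:ℝ)^2) * (1*1) := by
            apply mul_le_mul_of_nonneg_left _ (Real.exp_pos _).le
            exact mul_le_mul (Real.abs_cos_le_one _) (Real.abs_cos_le_one _) (abs_nonneg _)
              zero_le_one
        _ = rexp (-(π^2/(4*β)) * (n:ℝ)^2) := by ring
  rw [show (fun t => ∫ t', kRad β t t' ∂P) = fun t =>
      Real.sqrt (π/β) * ∑' n : ℤ, e n * (Real.cos (π*n*t) * a n) from funext hinner]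
  rw [integral_const_mul]
  congr 1
  rw [integral_tsum]
  · refine tsum_congr fun n => ?_
    have : (fun t => e n * (Real.cos (π*n*t) * a n))
        = fun t => (e n * a n) * Real.cos (π*(n:ℝ)*t) := by
      funext t; ring
    rw [this, integral_const_mul]
    show e n * a n * a n = e n * (a n)^2
    ring
  · intro n
    exact Continuous.aestronglyMeasurable (by fun_prop)
  · apply lint_bound β hβ
    intro n x
    rw [abs_mul, abs_mul, he]
    simp only [Real.abs_exp]
    calc rexp (-(π^2/(4*β)) * (n:ℝ)^2) * (|Real.cos (π*n*x)| * |a n|)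
        ≤ rexp (-(π^2/(4*β)) * (n:ℝ)^2) * (1*1) := by
          apply mul_le_mul_of_nonneg_left _ (Real.exp_pos _).le
          exact mul_le_mul (Real.abs_cos_le_one _) (abs_intcos_le_one _) (abs_nonneg _)
            zero_le_one
      _ = rexp (-(π^2/(4*β)) * (n:ℝ)^2) := by ring

lemma tsum_ge_one {w : ℤ → ℝ} (hw : ∀ n, 0 ≤ w n) (hsum : Summable w) (h0 : w 0 = 1) :
    1 ≤ ∑' n, w n :=
  h0 ▸ Summable.le_tsum hsum 0 (fun i _ => hw i)

lemma tsum_eq_one_iff {w : ℤ → ℝ} (hw : ∀ n, 0 ≤ w n) (hsum : Summable w) (h0 : w 0 = 1) :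
    (∑' n, w n) = 1 ↔ ∀ n : ℤ, n ≠ 0 → w n = 0 := by
  constructor
  · intro h
    have hs2 : Summable (fun n : ℤ => if n = 0 then 0 else w n) := by
      refine Summable.of_nonneg_of_le (fun n => ?_) (fun n => ?_) hsum
      · split <;> simp [hw]
      · split <;> simp [hw]
    have key : (∑' n : ℤ, if n = 0 then 0 else w n) = 0 := by
      have := Summable.tsum_eq_add_tsum_ite hsum 0
      rw [h, h0] at this
      linarith
    intro n hn
    have hle : w n ≤ ∑' m : ℤ, if m = 0 then 0 else w m := by
      have := Summable.le_tsum hs2 n (fun i _ => by split <;> simp [hw])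
      simpa [hn] using this
    have := hw n
    linarith [key ▸ hle]
  · intro h
    rw [tsum_eq_single 0 h, h0]

lemma cos_moment_vol (n : ℤ) (hn : n ≠ 0) :
    ∫ t in Set.Icc (0:ℝ) 1, Real.cos (π*n*t) = 0 := by
  have hc : (π*(n:ℝ)) ≠ 0 := by
    have := Real.pi_ne_zero
    have : (n:ℝ) ≠ 0 := Int.cast_ne_zero.2 hn
    positivity
  rw [MeasureTheory.integral_Icc_eq_integral_Ioc,
    ← intervalIntegral.integral_of_le (zero_le_one)]
  rw [intervalIntegral.integral_comp_mul_left (fun x => Real.cos x) hc,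
    integral_cos]
  simp only [mul_one, mul_zero, Real.sin_zero, sub_zero]
  rw [mul_comm π (n:ℝ), Real.sin_int_mul_pi]
  simp

lemma measure_eq_of_cos_moments (P : Measure ℝ) [IsProbabilityMeasure P]
    (hP : P (Set.Icc (0:ℝ) 1)ᶜ = 0)
    (h : ∀ n : ℤ, n ≠ 0 → ∫ t, Real.cos (π*n*t) ∂P = 0) :
    P = volume.restrict (Set.Icc (0:ℝ) 1) := by
  set L : Measure ℝ := volume.restrict (Set.Icc (0:ℝ) 1) with hL
  haveI : IsProbabilityMeasure L := ⟨by
    rw [hL, Measure.restrict_apply_univ, Real.volume_Icc]; norm_num⟩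
  have hLc : L (Set.Icc (0:ℝ) 1)ᶜ = 0 := by
    rw [hL, Measure.restrict_apply (measurableSet_Icc.compl)]
    simp
  -- moments agree
  have hmom : ∀ n : ℕ, ∫ t, Real.cos (π*n*t) ∂P = ∫ t, Real.cos (π*n*t) ∂L := by
    intro n
    rcases Nat.eq_zero_or_pos n with h0 | hpos
    · subst h0
      simp only [Nat.cast_zero, mul_zero, zero_mul, Real.cos_zero]
      rw [integral_const, integral_const, probReal_univ, probReal_univ]
    · have hn : (n:ℤ) ≠ 0 := by exact_mod_cast hpos.ne'
      have h1 := h (n:ℤ) hn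
      have h2 := cos_moment_vol (n:ℤ) hn
      push_cast at h1 h2
      rw [h1, ← hL] at *
      rw [show (∫ t, Real.cos (π*(n:ℝ)*t) ∂L) = ∫ t in Set.Icc (0:ℝ) 1, Real.cos (π*(n:ℝ)*t) from rfl]
      rw [h2]
  -- the span of cosines
  set V : Submodule ℝ (ℝ → ℝ) :=
    Submodule.span ℝ (Set.range fun n : ℕ => fun t : ℝ => Real.cos (π*n*t)) with hV
  have hgen : ∀ n : ℕ, (fun t : ℝ => Real.cos (π*n*t)) ∈ V :=
    fun n => Submodule.subset_span ⟨n, rfl⟩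
  have hgood : ∀ f ∈ V, Integrable f P ∧ Integrable f L ∧ ∫ x, f x ∂P = ∫ x, f x ∂L := by
    intro f hf
    induction hf using Submodule.span_induction with
    | mem g hg =>
      obtain ⟨n, rfl⟩ := hg
      have hcont : Continuous fun t : ℝ => Real.cos (π*n*t) := by fun_prop
      have hint : ∀ (μ : Measure ℝ) [IsProbabilityMeasure μ],
          Integrable (fun t : ℝ => Real.cos (π*n*t)) μ := by
        intro μ _
        refine (integrable_const (1:ℝ)).mono' hcont.aestronglyMeasurable ?_
        filter_upwards with x
        rw [Real.norm_eq_abs]; exact Real.abs_cos_le_one _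
      exact ⟨hint P, hint L, hmom n⟩
    | zero => exact ⟨integrable_zero _ _ _, integrable_zero _ _ _, by simp⟩
    | add g₁ g₂ _ _ h₁ h₂ =>
      refine ⟨h₁.1.add h₂.1, h₁.2.1.add h₂.2.1, ?_⟩
      rw [show ((g₁ + g₂ : ℝ → ℝ)) = fun x => g₁ x + g₂ x from rfl]
      rw [integral_add h₁.1 h₂.1, integral_add h₁.2.1 h₂.2.1, h₁.2.2, h₂.2.2]
    | smul r g _ hg =>
      refine ⟨hg.1.smul r, hg.2.1.smul r, ?_⟩
      rw [show ((r • g : ℝ → ℝ)) = fun x => r • g x from rfl]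
      rw [integral_smul, integral_smul, hg.2.2]
  -- V is closed under multiplication by cos (π t)
  have hmulcos : ∀ f ∈ V, (fun t : ℝ => Real.cos (π*t) * f t) ∈ V := by
    intro f hf
    induction hf using Submodule.span_induction with
    | mem g hg =>
      obtain ⟨n, rfl⟩ := hg
      match n with
      | 0 =>
        have : (fun t : ℝ => Real.cos (π*t) * Real.cos (π*(0:ℕ)*t))
            = fun t : ℝ => Real.cos (π*(1:ℕ)*t) := by
          funext t; norm_num
        rw [this]; exact hgen 1
      | (k+1) =>
        have key : (fun t : ℝ => Real.cos (π*t) * Real.cos (π*((k+1:ℕ))*t))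
            = (1/2 : ℝ) • (fun t : ℝ => Real.cos (π*((k+2:ℕ))*t))
              + (1/2 : ℝ) • fun t : ℝ => Real.cos (π*(k:ℕ)*t) := by
          funext t
          simp only [Pi.add_apply, Pi.smul_apply, smul_eq_mul]
          have e1 : π*((k+2:ℕ):ℝ)*t = (π*((k+1:ℕ):ℝ)*t) + π*t := by push_cast; ring
          have e2 : π*((k:ℕ):ℝ)*t = (π*((k+1:ℕ):ℝ)*t) - π*t := by push_cast; ring
          rw [e1, e2, Real.cos_add, Real.cos_sub]
          ring
        rw [key]
        exact Submodule.add_mem _ (Submodule.smul_mem _ _ (hgen (k+2)))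
          (Submodule.smul_mem _ _ (hgen k))
    | zero =>
      have : (fun t : ℝ => Real.cos (π*t) * (0:ℝ → ℝ) t) = 0 := by
        funext t; simp
      rw [this]; exact Submodule.zero_mem _
    | add g₁ g₂ _ _ h₁ h₂ =>
      have : (fun t : ℝ => Real.cos (π*t) * (g₁ + g₂) t)
          = (fun t : ℝ => Real.cos (π*t) * g₁ t) + fun t : ℝ => Real.cos (π*t) * g₂ t := by
        funext t; simp [Pi.add_apply]; ring
      rw [this]; exact Submodule.add_mem _ h₁ h₂
    | smul r g _ hg =>
      have : (fun t : ℝ => Real.cos (π*t) * (r • g) t)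
          = r • fun t : ℝ => Real.cos (π*t) * g t := by
        funext t; simp [Pi.smul_apply, smul_eq_mul]; ring
      rw [this]; exact Submodule.smul_mem _ _ hg
  -- powers of cos (π t) are in V
  have hpow : ∀ k : ℕ, (fun t : ℝ => (Real.cos (π*t))^k) ∈ V := by
    intro k
    induction k with
    | zero =>
      have : (fun t : ℝ => (Real.cos (π*t))^0) = fun t : ℝ => Real.cos (π*(0:ℕ)*t) := by
        funext t; norm_num
      rw [this]; exact hgen 0
    | succ k ih =>
      have : (fun t : ℝ => (Real.cos (π*t))^(k+1))
          = fun t : ℝ => Real.cos (π*t) * (Real.cos (π*t))^k := by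
        funext t; ring
      rw [this]; exact hmulcos _ ih
  -- a.e. membership
  have hPae : ∀ᵐ x ∂P, x ∈ Set.Icc (0:ℝ) 1 := by
    rw [ae_iff]
    exact hP
  have hLae : ∀ᵐ x ∂L, x ∈ Set.Icc (0:ℝ) 1 := by
    rw [ae_iff]
    exact hLc
  -- Stone–Weierstrass setup
  let c : C(Set.Icc (0:ℝ) 1, ℝ) :=
    ⟨fun x => Real.cos (π * (x:ℝ)), by fun_prop⟩
  set A : Subalgebra ℝ C(Set.Icc (0:ℝ) 1, ℝ) := Algebra.adjoin ℝ {c} with hA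
  have hcmem : c ∈ A := Algebra.subset_adjoin (Set.mem_singleton c)
  have hsep : A.SeparatesPoints := by
    intro x y hxy
    refine ⟨_, ⟨c, hcmem, rfl⟩, fun hc => hxy ?_⟩
    have hπ := Real.pi_pos
    have hmx : π * (x:ℝ) ∈ Set.Icc 0 π := ⟨by nlinarith [x.2.1], by nlinarith [x.2.2]⟩
    have hmy : π * (y:ℝ) ∈ Set.Icc 0 π := ⟨by nlinarith [y.2.1], by nlinarith [y.2.2]⟩
    have heq := Real.injOn_cos hmx hmy hc
    have : (x:ℝ) = (y:ℝ) := by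
      exact mul_left_cancel₀ hπ.ne' heq
    exact Subtype.ext this
  -- main approximation step
  have main : ∀ (g : ℝ → ℝ) (C : ℝ), Continuous g → (∀ x, |g x| ≤ C) →
      ∫ x, g x ∂P = ∫ x, g x ∂L := by
    intro g C hg hgC
    have hgint : ∀ (μ : Measure ℝ) [IsProbabilityMeasure μ], Integrable g μ := by
      intro μ _
      refine (integrable_const C).mono' hg.aestronglyMeasurable ?_
      filter_upwards with x
      rw [Real.norm_eq_abs]; exact hgC x
    have hstep : ∀ ε : ℝ, 0 < ε → |(∫ x, g x ∂P) - ∫ x, g x ∂L| ≤ 2*ε := by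
      intro ε hε
      set fX : C(Set.Icc (0:ℝ) 1, ℝ) := ⟨fun x => g x, hg.comp continuous_subtype_val⟩ with hfX
      obtain ⟨p, hpnear⟩ :=
        ContinuousMap.exists_mem_subalgebra_near_continuousMap_of_separatesPoints A hsep fX ε hε
      obtain ⟨q, hq⟩ : ∃ q : Polynomial ℝ, Polynomial.aeval c q = (p : C(Set.Icc (0:ℝ) 1, ℝ)) := by
        have hmem : (p : C(Set.Icc (0:ℝ) 1, ℝ)) ∈ Algebra.adjoin ℝ {c} := p.2
        rw [Algebra.adjoin_singleton_eq_range_aeval] at hmem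
        exact hmem
      set F : ℝ → ℝ := fun t => Polynomial.eval (Real.cos (π*t)) q with hF
      have hFV : F ∈ V := by
        have : F = ∑ i ∈ Finset.range (q.natDegree + 1),
            q.coeff i • fun t : ℝ => (Real.cos (π*t))^i := by
          funext t
          show Polynomial.eval (Real.cos (π*t)) q = _
          rw [Polynomial.eval_eq_sum_range, Finset.sum_apply]
          simp [smul_eq_mul]
        rw [this]
        exact Submodule.sum_mem _ fun i _ => Submodule.smul_mem _ _ (hpow i)
      have hFp : ∀ x : Set.Icc (0:ℝ) 1, F (x:ℝ) = (p : C(Set.Icc (0:ℝ) 1, ℝ)) x := by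
        intro x
        rw [← hq]
        have h1 := Polynomial.aeval_algHom_apply (ContinuousMap.evalAlgHom ℝ ℝ x) c q
        have h2 : Polynomial.aeval (c x) q = Polynomial.eval (c x) q := by
          rw [← Polynomial.coe_aeval_eq_eval]
        exact h2.symm.trans h1
      have hFgood := hgood F hFV
      have hbd : ∀ x : ℝ, x ∈ Set.Icc (0:ℝ) 1 → |g x - F x| ≤ ε := by
        intro x hx
        have h1 : g x - F x = -(((p : C(Set.Icc (0:ℝ) 1, ℝ)) - fX) ⟨x, hx⟩) := by
          rw [ContinuousMap.sub_apply]
          rw [hFp ⟨x, hx⟩]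
          simp [hfX]
        rw [h1, abs_neg, ← Real.norm_eq_abs]
        exact le_trans (ContinuousMap.norm_coe_le_norm _ _) hpnear.le
      have e1 : ∫ x, (g x - F x) ∂P = (∫ x, g x ∂P) - ∫ x, F x ∂P :=
        integral_sub (hgint P) hFgood.1
      have e2 : ∫ x, (g x - F x) ∂L = (∫ x, g x ∂L) - ∫ x, F x ∂L :=
        integral_sub (hgint L) hFgood.2.1
      have hDP : |∫ x, (g x - F x) ∂P| ≤ ε := by
        have := MeasureTheory.norm_integral_le_of_norm_le_const (μ := P)
          (f := fun x => g x - F x) (C := ε) ?_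
        · simpa using this
        · filter_upwards [hPae] with x hx
          rw [Real.norm_eq_abs]; exact hbd x hx
      have hDL : |∫ x, (g x - F x) ∂L| ≤ ε := by
        have := MeasureTheory.norm_integral_le_of_norm_le_const (μ := L)
          (f := fun x => g x - F x) (C := ε) ?_
        · simpa using this
        · filter_upwards [hLae] with x hx
          rw [Real.norm_eq_abs]; exact hbd x hx
      have hkey : (∫ x, g x ∂P) - ∫ x, g x ∂L
          = (∫ x, (g x - F x) ∂P) - ∫ x, (g x - F x) ∂L := by
        rw [e1, e2, hFgood.2.2]; ring
      rw [hkey]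
      calc |(∫ x, (g x - F x) ∂P) - ∫ x, (g x - F x) ∂L|
          ≤ |∫ x, (g x - F x) ∂P| + |∫ x, (g x - F x) ∂L| := abs_sub _ _
        _ ≤ 2*ε := by linarith
    by_contra hne
    have habs : 0 < |(∫ x, g x ∂P) - ∫ x, g x ∂L| := by
      rw [abs_pos, sub_ne_zero]
      exact hne
    have := hstep (|(∫ x, g x ∂P) - ∫ x, g x ∂L| / 4) (by linarith)
    linarith
  -- conclude equality of measures
  apply ext_of_forall_lintegral_eq_of_IsFiniteMeasure
  intro f
  have hgc : Continuous (fun x : ℝ => ((f x : ℝ≥0) : ℝ)) :=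
    NNReal.continuous_coe.comp f.continuous
  obtain ⟨Cb, hCb⟩ := f.bounded
  have hgb : ∀ x : ℝ, |((f x : ℝ≥0) : ℝ)| ≤ ((f 0 : ℝ≥0) : ℝ) + Cb := by
    intro x
    have h1 : (0:ℝ) ≤ ((f x : ℝ≥0) : ℝ) := (f x).2
    have h2 := hCb x 0
    rw [NNReal.dist_eq] at h2
    have h3 : ((f x : ℝ≥0) : ℝ) - ((f 0 : ℝ≥0) : ℝ) ≤ Cb := le_trans (le_abs_self _) h2
    rw [abs_of_nonneg h1]
    linarith
  have hgint : ∀ (μ : Measure ℝ) [IsProbabilityMeasure μ],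
      Integrable (fun x : ℝ => ((f x : ℝ≥0) : ℝ)) μ := by
    intro μ _
    refine (integrable_const (((f 0 : ℝ≥0) : ℝ) + Cb)).mono' hgc.aestronglyMeasurable ?_
    filter_upwards with x
    rw [Real.norm_eq_abs]; exact hgb x
  rw [lintegral_coe_eq_integral f (hgint P), lintegral_coe_eq_integral f (hgint L),
    main (fun x : ℝ => ((f x : ℝ≥0) : ℝ)) (((f 0 : ℝ≥0) : ℝ) + Cb) hgc hgb]

/-- **Radial energy minimization.** For `β > 0` and every Borel probability measure `P` on
`[0,1]`, the radial energy `∬ k_rad dP dP` is at least `√(π/β)`, with equality iff `P` is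
Lebesgue measure restricted to `[0,1]`. -/
theorem radial_energy_minimization (β : ℝ) (hβ : 0 < β)
    (P : Measure ℝ) [IsProbabilityMeasure P] (hP : P (Set.Icc (0 : ℝ) 1)ᶜ = 0) :
    Real.sqrt (π / β) ≤ ∫ t, ∫ t', kRad β t t' ∂P ∂P ∧
      ((∫ t, ∫ t', kRad β t t' ∂P ∂P) = Real.sqrt (π / β) ↔
        P = volume.restrict (Set.Icc (0 : ℝ) 1)) := by
  have hE := energy_eq (P := P) β hβ
  set e : ℤ → ℝ := fun n => rexp (-(π^2/(4*β)) * (n:ℝ)^2) with he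
  set a : ℤ → ℝ := fun n => ∫ t, Real.cos (π*n*t) ∂P with ha
  set w : ℤ → ℝ := fun n => e n * (a n)^2 with hw
  have hw0 : w 0 = 1 := by
    have he0 : e 0 = 1 := by simp [he]
    have ha0 : a 0 = 1 := by
      rw [ha]
      simp only [Int.cast_zero, mul_zero, zero_mul, Real.cos_zero]
      rw [integral_const, probReal_univ]
      simp
    simp only [hw]
    rw [he0, ha0]; norm_num
  have hwnn : ∀ n, 0 ≤ w n := fun n => mul_nonneg (Real.exp_pos _).le (sq_nonneg _)
  have hwsum : Summable w := by
    apply summable_dom β hβ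
    intro n
    have h1 : |a n| ≤ 1 := abs_intcos_le_one _
    calc |(a n)^2| = |a n|^2 := by rw [abs_pow, ← abs_abs (a n), abs_abs]
      _ ≤ 1 := by nlinarith [abs_nonneg (a n)]
  have h1le : 1 ≤ ∑' n, w n := tsum_ge_one hwnn hwsum hw0
  have hsqrt_pos : 0 < Real.sqrt (π / β) :=
    Real.sqrt_pos.2 (div_pos Real.pi_pos hβ)
  constructor
  · rw [hE]
    calc Real.sqrt (π/β) = Real.sqrt (π/β) * 1 := (mul_one _).symm
      _ ≤ Real.sqrt (π/β) * ∑' n, w n :=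
          mul_le_mul_of_nonneg_left h1le hsqrt_pos.le
  · constructor
    · intro hEq
      rw [hE] at hEq
      have htsum : (∑' n, w n) = 1 := by
        have : Real.sqrt (π/β) * (∑' n, w n) = Real.sqrt (π/β) * 1 := by
          rw [mul_one]; exact hEq
        exact mul_left_cancel₀ hsqrt_pos.ne' this
      have hzero := (tsum_eq_one_iff hwnn hwsum hw0).1 htsum
      apply measure_eq_of_cos_moments P hP
      intro n hn
      have := hzero n hn
      simp only [hw] at this
      have hen : e n ≠ 0 := (Real.exp_pos _).ne'
      have : (a n)^2 = 0 := by
        rcases mul_eq_zero.1 this with h | h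
        · exact absurd h hen
        · exact h
      have : a n = 0 := by
        exact pow_eq_zero_iff (n := 2) (by norm_num) |>.1 this
      rw [ha] at this
      exact this
    · intro hPL
      rw [hE]
      have hz : ∀ n : ℤ, n ≠ 0 → w n = 0 := by
        intro n hn
        have : a n = 0 := by
          rw [ha, hPL]
          exact cos_moment_vol n hn
        simp only [hw]
        rw [this]
        ring
      rw [tsum_eq_single 0 hz, hw0, mul_one]
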